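/- Let A be a Hilbert algebra and φ, ψ closure endomorphisms of A. Then ψ ∘ φ is a closure endomorphism of A, and its kernel K_{ψ∘φ} = {x : ψ(φ(x)) = 1} is the least filter of A containing both K_φ = {x : φ(x) = 1} and K_ψ = {x : ψ(x) = 1}. -/
import Mathlib


/-- A Hilbert algebra: a set with implication `imp` and constant `one`. -/
class HilbertAlgebra (A : Type*) where
  imp : A → A → A
  one : A
  imp_one : ∀ x y : A, imp x (imp y x) = one
  imp_distrib : ∀ x y z : A,
    imp (imp x (imp y z)) (imp (imp x y) (imp x z)) = one
  imp_antisymm : ∀ x y : A, imp x y = one → imp y x = one → x = y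

namespace HilbertAlgebra

variable {A : Type*} [HilbertAlgebra A]

/-- The natural order of a Hilbert algebra: `x ≤ y` iff `x → y = 1`. -/
def le (x y : A) : Prop := imp x y = one

/-- A closure endomorphism: an endomorphism that is also a closure operator. -/
def IsClosureEndo (φ : A → A) : Prop :=
  (∀ x y : A, φ (imp x y) = imp (φ x) (φ y)) ∧
  (∀ x : A, le x (φ x)) ∧
  (∀ x : A, φ (φ x) = φ x) ∧
  (∀ x y : A, le x y → le (φ x) (φ y))

/-- A filter of a Hilbert algebra. -/
def IsFilter (J : Set A) : Prop :=
  (one : A) ∈ J ∧ ∀ x y : A, x ∈ J → imp x y ∈ J → y ∈ J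

/-- If `1 → p = 1` then `p = 1`. -/
theorem aux_one_imp {p : A} (h : imp one p = one) : p = one := by
  have h1 : imp p (imp one p) = one := imp_one p one
  have h2 : imp (imp one p) p = one := by rw [h]; exact h
  have := imp_antisymm p (imp one p) h1 h2
  rw [this, h]

/-- Modus ponens. -/
theorem aux_mp {a b : A} (h1 : imp a b = one) (h2 : a = one) : b = one := by
  exact aux_one_imp (h2 ▸ h1)

/-- Reflexivity: `x → x = 1`. -/
theorem aux_refl (x : A) : imp x x = one := by
  have h1 : imp x (imp (imp x x) x) = one := imp_one x (imp x x)
  have h2 := imp_distrib x (imp x x) x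
  have h3 := aux_mp h2 h1
  exact aux_mp h3 (imp_one x x)

/-- Transitivity of the natural order. -/
theorem aux_trans {a b c : A} (hab : imp a b = one) (hbc : imp b c = one) :
    imp a c = one := by
  have h1 : imp (imp b c) (imp a (imp b c)) = one := imp_one (imp b c) a
  have h2 := aux_mp h1 hbc
  have h3 := imp_distrib a b c
  have h4 := aux_mp h3 h2
  exact aux_mp h4 hab

/-- For closure endomorphisms `φ`, `ψ`, the composite `ψ ∘ φ` is a closure
endomorphism, and its kernel is the least filter containing both kernels. -/
theorem kernel_comp_eq_join (φ ψ : A → A)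
    (hφ : IsClosureEndo φ) (hψ : IsClosureEndo ψ) :
    IsClosureEndo (ψ ∘ φ) ∧
    IsFilter {x : A | ψ (φ x) = one} ∧
    {x : A | φ x = one} ⊆ {x : A | ψ (φ x) = one} ∧
    {x : A | ψ x = one} ⊆ {x : A | ψ (φ x) = one} ∧
    (∀ J : Set A, IsFilter J → {x : A | φ x = one} ⊆ J → {x : A | ψ x = one} ⊆ J →
      {x : A | ψ (φ x) = one} ⊆ J) := by
  obtain ⟨φhom, φext, φidem, φmono⟩ := hφ
  obtain ⟨ψhom, ψext, ψidem, ψmono⟩ := hψ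
  -- φ and ψ fix 1
  have φone : φ one = one := aux_one_imp (φext one)
  have ψone : ψ one = one := aux_one_imp (ψext one)
  refine ⟨⟨?_, ?_, ?_, ?_⟩, ⟨?_, ?_⟩, ?_, ?_, ?_⟩
  · intro x y
    simp only [Function.comp_apply, φhom, ψhom]
  · intro x
    exact aux_trans (φext x) (ψext (φ x))
  · -- idempotence of ψ ∘ φ
    intro x
    simp only [Function.comp_apply]
    set u := φ x with hu_def
    have hu : φ u = u := φidem x
    set s := imp (ψ u) u with hs_def
    have hs : ψ s = one := by
      rw [hs_def, ψhom, ψidem, aux_refl]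
    have hφs : ψ (φ s) = one := by
      have h1 : imp (ψ s) (ψ (φ s)) = one := ψmono s (φ s) (φext s)
      rw [hs] at h1
      exact aux_one_imp h1
    have hφs' : φ s = imp (φ (ψ u)) u := by rw [hs_def, φhom, hu]
    rw [hφs', ψhom] at hφs
    -- hφs : imp (ψ (φ (ψ u))) (ψ u) = one
    have hge : imp (ψ u) (ψ (φ (ψ u))) = one :=
      aux_trans (φext (ψ u)) (ψext (φ (ψ u)))
    exact imp_antisymm _ _ hφs hge
  · intro x y h
    exact ψmono _ _ (φmono _ _ h)
  · -- 1 ∈ kernel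
    show ψ (φ one) = one
    rw [φone, ψone]
  · -- kernel closed under modus ponens
    intro x y hx hxy
    simp only [Set.mem_setOf_eq] at *
    rw [φhom, ψhom, hx] at hxy
    exact aux_one_imp hxy
  · intro x hx
    simp only [Set.mem_setOf_eq] at *
    rw [hx, ψone]
  · intro x hx
    simp only [Set.mem_setOf_eq] at *
    have h1 : imp (ψ x) (ψ (φ x)) = one := ψmono x (φ x) (φext x)
    rw [hx] at h1
    exact aux_one_imp h1
  · intro J hJ hJφ hJψ x hx
    simp only [Set.mem_setOf_eq] at hx
    have ha : imp (φ x) x ∈ J := by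
      apply hJφ
      show φ (imp (φ x) x) = one
      rw [φhom, φidem, aux_refl]
    have hb : imp (ψ (φ x)) (φ x) ∈ J := by
      apply hJψ
      show ψ (imp (ψ (φ x)) (φ x)) = one
      rw [ψhom, ψidem, aux_refl]
    rw [hx] at hb
    have hφx : φ x ∈ J := hJ.2 one (φ x) hJ.1 hb
    exact hJ.2 (φ x) x hφx ha

end HilbertAlgebra
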